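/- Fix κ ∈ (0,1) and let C_S > 0 satisfy ‖f − f̄‖_{L∞(T²)} ≤ C_S‖Δf‖_{L²(T²)} for all f ∈ H²(T²). Set C_κ = C_S²/(1−κ)². If η̄₀ > 0 and 2E(0) ≤ η̄₀²/C_κ, and if for all t ∈ [0,T) the function η(·,t) ∈ H²(T²) has mean η̄₀ and ‖Δ_x η(t)‖²_{L²} ≤ 2E(0), then η(x,t) ≥ κ η̄₀ > 0 for all x ∈ T² and t ∈ [0,T). In particular no contact with the bottom boundary {z = 0} occurs. -/
import Mathlib


open MeasureTheory Real Set

noncomputable section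

/-- Fundamental domain of the flat unit torus `T² = ℝ²/ℤ²` (unit area). -/
def T2 : Set (ℝ × ℝ) := Set.Icc 0 1 ×ˢ Set.Icc 0 1

/-- A function on `ℝ²` descends to the torus `T²` iff it is `ℤ²`-periodic. -/
def Periodic2 (f : ℝ × ℝ → ℝ) : Prop :=
  ∀ x : ℝ × ℝ, ∀ k : ℤ × ℤ, f (x.1 + k.1, x.2 + k.2) = f x

/-- First partial derivative. -/
def d1 (f : ℝ × ℝ → ℝ) (x : ℝ × ℝ) : ℝ := deriv (fun s => f (s, x.2)) x.1

/-- Second partial derivative. -/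
def d2 (f : ℝ × ℝ → ℝ) (x : ℝ × ℝ) : ℝ := deriv (fun s => f (x.1, s)) x.2

/-- Laplacian on `T²`. -/
def lap (f : ℝ × ℝ → ℝ) : ℝ × ℝ → ℝ := fun x => d1 (d1 f) x + d2 (d2 f) x

/-- Mean value over `T²` (which has unit area). -/
def meanT2 (f : ℝ × ℝ → ℝ) : ℝ := ∫ x in T2, f x

/-- Square of the `L²(T²)` norm. -/
def L2normSq (f : ℝ × ℝ → ℝ) : ℝ := ∫ x in T2, (f x) ^ 2

/-- With `C_κ = C_S²/(1−κ)²`, the smallness condition `2E(0) ≤ η̄₀²/C_κ`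
together with mean conservation and the energy bound `‖Δη(t)‖² ≤ 2E(0)` implies the
uniform no-contact lower bound `η(x,t) ≥ κ η̄₀ > 0`. -/
theorem no_contact_condition
    (T : ℝ) (hT : 0 < T)
    (κ : ℝ) (hκ : κ ∈ Set.Ioo (0 : ℝ) 1)
    (C_S : ℝ) (hCSpos : 0 < C_S)
    (hCS : ∀ f : ℝ × ℝ → ℝ, Periodic2 f → ContDiff ℝ 2 f →
      ∀ x : ℝ × ℝ, |f x - meanT2 f| ≤ C_S * Real.sqrt (L2normSq (lap f)))
    (C_κ : ℝ) (hCκ : C_κ = C_S ^ 2 / (1 - κ) ^ 2)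
    (etaBar0 : ℝ) (hetaBar0 : 0 < etaBar0)
    (E0 : ℝ) (hE0 : 0 ≤ E0)
    (hsmall : 2 * E0 ≤ etaBar0 ^ 2 / C_κ)
    (η : ℝ × ℝ → ℝ → ℝ)
    (hreg : ∀ t ∈ Set.Ico 0 T, Periodic2 (fun x => η x t) ∧ ContDiff ℝ 2 (fun x => η x t))
    (hmean : ∀ t ∈ Set.Ico 0 T, meanT2 (fun x => η x t) = etaBar0)
    (henergy : ∀ t ∈ Set.Ico 0 T, L2normSq (lap (fun x => η x t)) ≤ 2 * E0) :
    0 < κ * etaBar0 ∧ ∀ x : ℝ × ℝ, ∀ t ∈ Set.Ico 0 T, η x t ≥ κ * etaBar0 := by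
  obtain ⟨hκ0, hκ1⟩ := hκ
  constructor
  · exact mul_pos hκ0 hetaBar0
  intro x t ht
  obtain ⟨hper, hcd⟩ := hreg t ht
  have hbd := hCS _ hper hcd x
  rw [hmean t ht] at hbd
  have h1κ : 0 < 1 - κ := by linarith
  -- sqrt bound
  have hkey : Real.sqrt (L2normSq (lap fun x => η x t)) ≤ (1 - κ) * etaBar0 / C_S := by
    have h2 : L2normSq (lap fun x => η x t) ≤ ((1 - κ) * etaBar0 / C_S) ^ 2 := by
      have := henergy t ht
      have hs : 2 * E0 ≤ ((1 - κ) * etaBar0 / C_S) ^ 2 := by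
        rw [hCκ] at hsmall
        rw [div_div_eq_mul_div] at hsmall
        have heq : ((1 - κ) * etaBar0 / C_S) ^ 2 = etaBar0 ^ 2 * (1 - κ) ^ 2 / C_S ^ 2 := by ring
        rw [heq]; exact hsmall
      linarith
    calc Real.sqrt (L2normSq (lap fun x => η x t))
        ≤ Real.sqrt (((1 - κ) * etaBar0 / C_S) ^ 2) := Real.sqrt_le_sqrt h2
      _ = (1 - κ) * etaBar0 / C_S := Real.sqrt_sq (by positivity)
  have : |η x t - etaBar0| ≤ (1 - κ) * etaBar0 := by
    calc |η x t - etaBar0| ≤ C_S * Real.sqrt (L2normSq (lap fun x => η x t)) := hbd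
      _ ≤ C_S * ((1 - κ) * etaBar0 / C_S) := by
          exact mul_le_mul_of_nonneg_left hkey hCSpos.le
      _ = (1 - κ) * etaBar0 := by field_simp
  have := abs_le.mp this
  linarith [this.1]
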